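/- arXiv:2410.08937 — 2 statements merged into one kernel-verified Lean document; each statement's English description precedes it below -/
import Mathlib

section
/- Let A be a positive definite d×d complex matrix, B a positive semidefinite d×d matrix, and P an orthogonal projection (P = P² = P†). Then the trace of P times the Kubo–Ando geometric mean ω(A,B) := A^{1/2}(A^{-1/2} B A^{-1/2})^{1/2} A^{1/2} satisfies Tr(P ω(A,B)) ≤ √(Tr(PA)) · √(Tr(PB)). -/
open Matrix
open scoped ComplexOrder
set_option maxHeartbeats 1000000

/-- The positive semidefinite square root of a positive semidefinite matrix, as defined in
the older Mathlib (`Matrix.PosSemidef.sqrt`, since removed). -/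
noncomputable def Matrix.PosSemidef.sqrt {n : Type*} [Fintype n] [DecidableEq n]
    {A : Matrix n n ℂ} (hA : A.PosSemidef) : Matrix n n ℂ :=
  hA.1.eigenvectorUnitary.1 * diagonal ((↑) ∘ (√·) ∘ hA.1.eigenvalues) *
    (star hA.1.eigenvectorUnitary : Matrix n n ℂ)

lemma Matrix.PosSemidef.posSemidef_sqrt {n : Type*} [Fintype n] [DecidableEq n]
    {A : Matrix n n ℂ} (hA : A.PosSemidef) : hA.sqrt.PosSemidef := by
  unfold Matrix.PosSemidef.sqrt
  have hD : (diagonal (((↑) : ℝ → ℂ) ∘ (√·) ∘ hA.1.eigenvalues)).PosSemidef := by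
    rw [posSemidef_diagonal_iff]
    intro i
    simp only [Function.comp_apply]
    exact_mod_cast Real.sqrt_nonneg _
  have := hD.mul_mul_conjTranspose_same (hA.1.eigenvectorUnitary.1)
  simpa [Matrix.star_eq_conjTranspose] using this

lemma Matrix.PosSemidef.sqrt_mul_self {n : Type*} [Fintype n] [DecidableEq n]
    {A : Matrix n n ℂ} (hA : A.PosSemidef) : hA.sqrt * hA.sqrt = A := by
  unfold Matrix.PosSemidef.sqrt
  set U := hA.1.eigenvectorUnitary
  have hU : (star U : Matrix n n ℂ) * U.1 = 1 := Matrix.UnitaryGroup.star_mul_self U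
  have e : U.1 * diagonal (((↑) : ℝ → ℂ) ∘ (√·) ∘ hA.1.eigenvalues) * (star U : Matrix n n ℂ) *
      (U.1 * diagonal (((↑) : ℝ → ℂ) ∘ (√·) ∘ hA.1.eigenvalues) * (star U : Matrix n n ℂ))
      = U.1 * (diagonal (((↑) : ℝ → ℂ) ∘ (√·) ∘ hA.1.eigenvalues) *
        ((star U : Matrix n n ℂ) * U.1) * diagonal (((↑) : ℝ → ℂ) ∘ (√·) ∘ hA.1.eigenvalues))
        * (star U : Matrix n n ℂ) := by
    simp only [Matrix.mul_assoc]
  rw [e, hU, Matrix.mul_one, diagonal_mul_diagonal]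
  conv_rhs => rw [hA.1.spectral_theorem, Unitary.conjStarAlgAut_apply]
  congr 3
  funext i
  simp only [Function.comp_apply]
  rw [← Complex.ofReal_mul, Real.mul_self_sqrt (hA.eigenvalues_nonneg i)]
  rfl

/-- The Kubo–Ando geometric mean `ω(A,B) = A^{1/2} (A^{-1/2} B A^{-1/2})^{1/2} A^{1/2}`
of a positive definite matrix `A` and a positive semidefinite matrix `B`, where
`A^{-1/2}` is realized as the inverse of the positive square root of `A`. -/
noncomputable def kuboAndoGeomMean {d : ℕ} (A B : Matrix (Fin d) (Fin d) ℂ)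
    (hA : A.PosDef) (hB : B.PosSemidef) : Matrix (Fin d) (Fin d) ℂ :=
  hA.posSemidef.sqrt *
    ((hB.mul_mul_conjTranspose_same (hA.posSemidef.sqrt⁻¹)).sqrt) *
    hA.posSemidef.sqrt

/-- View a matrix as a vector in Euclidean space (Hilbert–Schmidt). -/
def matToE {d : ℕ} (U : Matrix (Fin d) (Fin d) ℂ) :
    EuclideanSpace ℂ (Fin d × Fin d) := WithLp.toLp 2 (fun p => U p.1 p.2)

lemma inner_matToE {d : ℕ} (U V : Matrix (Fin d) (Fin d) ℂ) :
    (inner ℂ (matToE U) (matToE V) : ℂ) = (Uᴴ * V).trace := by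
  rw [PiLp.inner_apply, ← Finset.univ_product_univ, Finset.sum_product]
  simp only [RCLike.inner_apply, matToE, Matrix.trace, Matrix.diag_apply,
    Matrix.mul_apply, Matrix.conjTranspose_apply]
  rw [Finset.sum_comm]
  refine Finset.sum_congr rfl fun _ _ => Finset.sum_congr rfl fun _ _ => ?_
  rw [mul_comm]; rfl

/-- Cauchy–Schwarz for the Hilbert–Schmidt inner product, real-part form. -/
lemma trace_cauchySchwarz_re {d : ℕ} (X Y : Matrix (Fin d) (Fin d) ℂ) :
    (Xᴴ * Y).trace.re ≤
      Real.sqrt ((Xᴴ * X).trace.re) * Real.sqrt ((Yᴴ * Y).trace.re) := by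
  have hx : ‖matToE X‖ = Real.sqrt ((Xᴴ * X).trace.re) := by
    rw [norm_eq_sqrt_re_inner (𝕜 := ℂ), inner_matToE]; rfl
  have hy : ‖matToE Y‖ = Real.sqrt ((Yᴴ * Y).trace.re) := by
    rw [norm_eq_sqrt_re_inner (𝕜 := ℂ), inner_matToE]; rfl
  calc (Xᴴ * Y).trace.re
      = (inner ℂ (matToE X) (matToE Y) : ℂ).re := by rw [inner_matToE]
  _ ≤ ‖(inner ℂ (matToE X) (matToE Y) : ℂ)‖ := Complex.re_le_norm _
  _ ≤ ‖matToE X‖ * ‖matToE Y‖ := norm_inner_le_norm _ _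
  _ = _ := by rw [hx, hy]

/-- For `A` positive definite, `B` positive semidefinite and `P` an
orthogonal projection, `Tr(P ω(A,B)) ≤ √(Tr(P A)) · √(Tr(P B))`. -/
theorem trace_proj_geomMean_le_sqrt_mul_sqrt {d : ℕ}
    (A B P : Matrix (Fin d) (Fin d) ℂ)
    (hA : A.PosDef) (hB : B.PosSemidef)
    (hPproj : P * P = P) (hPherm : Pᴴ = P) :
    (P * kuboAndoGeomMean A B hA hB).trace.re ≤
      Real.sqrt ((P * A).trace.re) * Real.sqrt ((P * B).trace.re) := by
  set S := hA.posSemidef.sqrt with hSdef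
  have hSps : S.PosSemidef := hA.posSemidef.posSemidef_sqrt
  have hSH : Sᴴ = S := hSps.isHermitian
  have hSS : S * S = A := hA.posSemidef.sqrt_mul_self
  have hdet : IsUnit S.det := by
    have h : S.det * S.det = A.det := by rw [← Matrix.det_mul, hSS]
    have hAdet : A.det ≠ 0 := hA.det_pos.ne'
    refine isUnit_iff_ne_zero.2 fun h0 => hAdet ?_
    rw [← h, h0, mul_zero]
  have hSinv : S * S⁻¹ = 1 := Matrix.mul_nonsing_inv S hdet
  have hSinv' : S⁻¹ * S = 1 := Matrix.nonsing_inv_mul S hdet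
  have hSinvH : (S⁻¹)ᴴ = S⁻¹ := by
    rw [Matrix.conjTranspose_nonsing_inv, hSH]
  set C := (hB.mul_mul_conjTranspose_same S⁻¹).sqrt with hCdef
  have hCps : C.PosSemidef := (hB.mul_mul_conjTranspose_same S⁻¹).posSemidef_sqrt
  have hCH : Cᴴ = C := hCps.isHermitian
  have hCC : C * C = S⁻¹ * B * (S⁻¹)ᴴ :=
    (hB.mul_mul_conjTranspose_same S⁻¹).sqrt_mul_self
  have hSMS : S * (C * C) * S = B := by
    rw [hCC, hSinvH]
    calc S * (S⁻¹ * B * S⁻¹) * S = (S * S⁻¹) * B * (S⁻¹ * S) := by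
          simp only [Matrix.mul_assoc]
    _ = B := by rw [hSinv, hSinv', Matrix.one_mul, Matrix.mul_one]
  set X := S * P with hXdef
  set Y := C * (S * P) with hYdef
  have hXH : Xᴴ = P * S := by rw [hXdef, Matrix.conjTranspose_mul, hSH, hPherm]
  have hkey : (P * kuboAndoGeomMean A B hA hB).trace = (Xᴴ * Y).trace := by
    have e1 : Xᴴ * Y = (P * (S * (C * S))) * P := by
      rw [hXH, hYdef]; simp only [Matrix.mul_assoc]
    have e2 : ((P * (S * (C * S))) * P).trace = (P * (S * (C * S))).trace := by
      rw [Matrix.trace_mul_comm, ← Matrix.mul_assoc, hPproj]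
    have hw : kuboAndoGeomMean A B hA hB = S * C * S := rfl
    rw [hw, e1, e2, Matrix.mul_assoc S C S]
  have hXX : (Xᴴ * X).trace = (P * A).trace := by
    have e1 : Xᴴ * X = (P * A) * P := by
      rw [hXH, hXdef, ← hSS]; simp only [Matrix.mul_assoc]
    rw [e1, Matrix.trace_mul_comm, ← Matrix.mul_assoc, hPproj]
  have hYY : (Yᴴ * Y).trace = (P * B).trace := by
    have hYH : Yᴴ = P * S * C := by
      rw [hYdef]
      simp only [Matrix.conjTranspose_mul, hSH, hPherm, hCH, Matrix.mul_assoc]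
    have e1 : Yᴴ * Y = (P * B) * P := by
      rw [hYH, hYdef, ← hSMS]; simp only [Matrix.mul_assoc]
    rw [e1, Matrix.trace_mul_comm, ← Matrix.mul_assoc, hPproj]
  calc (P * kuboAndoGeomMean A B hA hB).trace.re = (Xᴴ * Y).trace.re := by
        rw [hkey]
  _ ≤ Real.sqrt ((Xᴴ * X).trace.re) * Real.sqrt ((Yᴴ * Y).trace.re) :=
      trace_cauchySchwarz_re X Y
  _ = _ := by rw [hXX, hYY]
end

section
/- Let σ be a positive semidefinite operator on a finite-dimensional Hilbert space with spectral decomposition σ = Σ_w λ_w P_w where {P_w}_{w∈W} are |W| mutually orthogonal rank-one projections summing to the identity on the support space (extended to a resolution of identity). For any operator M with 0 ≤ M ≤ I, the pinched operator Π(M) := Σ_w P_w M P_w satisfies Π(M) ≥ M / |W|, where |W| is the number of projections in the pinching. -/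
open Matrix
open scoped ComplexOrder

private lemma psd_sum {d : ℕ} {W : Type*} [Fintype W]
    (A : W → Matrix (Fin d) (Fin d) ℂ) (h : ∀ w, (A w).PosSemidef) :
    (∑ w, A w).PosSemidef := by
  classical
  refine Finset.sum_induction A _ (fun a b ha hb => ha.add hb) Matrix.PosSemidef.zero
    (fun w _ => h w)

private lemma psd_smul {d : ℕ} {A : Matrix (Fin d) (Fin d) ℂ} (hA : A.PosSemidef)
    {c : ℝ} (hc : 0 ≤ c) : ((c : ℂ) • A).PosSemidef := by
  refine .of_dotProduct_mulVec_nonneg ?_ ?_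
  · unfold Matrix.IsHermitian
    rw [conjTranspose_smul, hA.1]
    congr 1
    simp
  · intro x
    rw [Matrix.smul_mulVec, dotProduct_smul]
    exact mul_nonneg (by exact_mod_cast hc) (hA.dotProduct_mulVec_nonneg x)

/-- pinching inequality: if `{P w}` is a family of mutually
orthogonal projections summing to the identity, and `0 ≤ M ≤ I`, then the
pinched operator `Σ_w P_w M P_w` dominates `M / |W|` in the Löwner order. -/
theorem pinching_inequality {d : ℕ} {W : Type*} [Fintype W]
    (P : W → Matrix (Fin d) (Fin d) ℂ)
    (hproj : ∀ w, P w * P w = P w)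
    (hherm : ∀ w, (P w)ᴴ = P w)
    (horth : ∀ w w', w ≠ w' → P w * P w' = 0)
    (hsum : ∑ w, P w = 1)
    (M : Matrix (Fin d) (Fin d) ℂ)
    (hM : M.PosSemidef) (hMle : (1 - M).PosSemidef) :
    ((∑ w, P w * M * P w) - ((Fintype.card W : ℂ)⁻¹ • M)).PosSemidef := by
  classical
  rcases Nat.eq_zero_or_pos (Fintype.card W) with h0 | hpos
  · have hempty : IsEmpty W := Fintype.card_eq_zero_iff.mp h0
    have h1 : (1 : Matrix (Fin d) (Fin d) ℂ) = 0 := by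
      rw [← hsum]; simp
    have hM0 : M = 0 := by
      calc M = M * 1 := by rw [mul_one]
      _ = 0 := by rw [h1, mul_zero]
    simp [hM0, Matrix.PosSemidef.zero]
  · set n : ℕ := Fintype.card W with hn
    set R := (open scoped MatrixOrder in CFC.sqrt M) with hR
    have hRR : R * R = M := by open scoped MatrixOrder in exact CFC.sqrt_mul_sqrt_self M hM.nonneg
    have hRH : Rᴴ = R := by open scoped MatrixOrder in exact (CFC.sqrt_nonneg M).posSemidef.1
    set B : W → Matrix (Fin d) (Fin d) ℂ := fun w => R * P w with hB
    have hBB : ∀ w w', (B w)ᴴ * (B w') = P w * M * P w' := by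
      intro w w'
      simp only [hB, conjTranspose_mul, hRH, hherm]
      rw [mul_assoc, ← mul_assoc R R, hRR, mul_assoc]
    have hkey : ∑ w, ∑ w', ((B w - B w')ᴴ * (B w - B w'))
        = ((2 * n : ℝ) : ℂ) • (∑ w, P w * M * P w) - (2 : ℂ) • M := by
      have expand : ∀ w w', (B w - B w')ᴴ * (B w - B w')
          = P w * M * P w - P w * M * P w' - P w' * M * P w + P w' * M * P w' := by
        intro w w'
        rw [conjTranspose_sub, sub_mul, mul_sub, mul_sub, hBB, hBB, hBB, hBB]
        abel
      simp only [expand]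
      have hMP : ∑ w', P w' * M = M := by
        rw [← Finset.sum_mul, hsum, one_mul]
      have e1 : ∀ w : W, ∑ w', P w * M * P w' = P w * M := by
        intro w
        rw [← Finset.mul_sum, hsum, mul_one]
      have e2 : ∀ w : W, ∑ w', P w' * M * P w = M * P w := by
        intro w
        rw [← Finset.sum_mul, hMP]
      have e3 : ∑ x : W, M * P x = M := by
        rw [← Finset.mul_sum, hsum, mul_one]
      simp only [Finset.sum_add_distrib, Finset.sum_sub_distrib, Finset.sum_const,
        Finset.card_univ, e1, e2, hMP, e3, ← hn]
      simp only [← Nat.cast_smul_eq_nsmul ℂ]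
      rw [← Finset.smul_sum]
      push_cast
      module
    have hne : ((2 * n : ℝ)) ≠ 0 := by positivity
    have hgoal : (∑ w, P w * M * P w) - ((n : ℂ)⁻¹ • M)
        = (((2 * n : ℝ)⁻¹ : ℝ) : ℂ) • (∑ w, ∑ w', ((B w - B w')ᴴ * (B w - B w'))) := by
      have hnC : (n : ℂ) ≠ 0 := Nat.cast_ne_zero.mpr hpos.ne'
      rw [hkey]
      match_scalars <;> field_simp
    rw [hgoal]
    exact psd_smul (psd_sum _ fun w => psd_sum _ fun w' =>
      Matrix.posSemidef_conjTranspose_mul_self _) (by positivity)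
end
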